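/- For every positive integer n: 2 * Le_{1,n}(-1) = sum_{k=1}^{n} zetabar(k) * zetabar(n-k+1) - n * zeta(n+1), where zetabar(k) = Li_k(-1) for k >= 2 and zetabar(1) = -ln 2, Le_{1,n}(-1) = sum_{n_1 >= n_2 >= 1} (-1)^{n_1}/(n_1 * n_2^n). -/

import Mathlib

open Filter

/-- `ζ̄(k) = ∑_{m ≥ 1} (-1)^m / m^k`; equal to `-log 2` for `k = 1`. -/
noncomputable def zetaBar (k : ℕ) : ℝ :=
  if k = 1 then -Real.log 2 else ∑' m : ℕ, (-1 : ℝ) ^ (m + 1) / (m + 1 : ℝ) ^ k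

/-!
Expanding the products of the partial sums `ζ̄_N(k) = ∑_{m ≤ N} (-1)^m / m^k` turns
`∑_k ζ̄_N(k) ζ̄_N(n - k + 1)` into a double sum over `a, b ≤ N` with kernel
`∑_k a^{-k} b^{-(n+1-k)}`, a truncated geometric sum: it is `n / a^{n+1}` on the diagonal and
`(b^{-n} - a^{-n}) / (a - b)` off it. The kernel is symmetric, so the off-diagonal part is twice
the sum over `a = b + c > b`, which equals the partial sum of `Le_{1,n}(-1)` minus the error
`∑_{c ≤ N} (-1)^c / c ∑_{N - c < j ≤ N} j^{-n} = ∑_{j ≤ N} j^{-n} ∑_{N - j < c ≤ N} (-1)^c / c`.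
Each inner alternating sum on the right is at most `1 / (N - j + 1)`, so the error is
`O(log N / N)`, and letting `N → ∞` gives the formula;
`ζ̄_N(1) → -log 2` comes from Abel's limit theorem applied to the series of `log (1 + x)`.
-/

open Finset Topology

theorem sum_Icc_one_eq_sum_range {M : Type*} [AddCommMonoid M] (f : ℕ → M) (N : ℕ) :
    ∑ m ∈ Icc 1 N, f m = ∑ i ∈ range N, f (i + 1) := by
  rw [range_eq_Ico, sum_Ico_add', zero_add, Ico_add_one_right_eq_Icc]

theorem sum_sum_eq_sum_diag_add_two_nsmul {ι M : Type*} [LinearOrder ι] [AddCommMonoid M]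
    (s : Finset ι) (f : ι → ι → M) (hf : ∀ a ∈ s, ∀ b ∈ s, f a b = f b a) :
    ∑ a ∈ s, ∑ b ∈ s, f a b = ∑ a ∈ s, f a a + 2 • ∑ a ∈ s, ∑ b ∈ s with b < a, f a b := by
  have split : ∀ a ∈ s, ∑ b ∈ s, f a b
      = f a a + ∑ b ∈ s with b < a, f a b + ∑ b ∈ s with a < b, f a b := by
    intro a ha
    have : s.filter (¬ · < a) = insert a (s.filter (a < ·)) := by
      ext b; simp only [mem_filter, mem_insert, not_lt]; constructor
      · rintro ⟨hb, hab⟩; rcases hab.eq_or_lt with rfl | h <;> tauto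
      · rintro (rfl | ⟨hb, hab⟩) <;> simp_all [le_of_lt]
    rw [← sum_filter_add_sum_filter_not s (· < a), this, sum_insert (by simp)]
    abel
  have upper : ∑ a ∈ s, ∑ b ∈ s with a < b, f a b = ∑ a ∈ s, ∑ b ∈ s with b < a, f a b := by
    rw [sum_comm' (t' := s) (s' := fun b => s.filter (· < b))]
    · exact sum_congr rfl fun b hb => sum_congr rfl fun a ha => hf a (mem_filter.1 ha).1 b hb
    · intro a b; simp only [mem_filter]; tauto
  rw [sum_congr rfl split, sum_add_distrib, sum_add_distrib, upper, two_nsmul, add_assoc]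

theorem sum_Icc_sum_lt_eq_sum_Icc_sum_add {M : Type*} [AddCommMonoid M] (N : ℕ) (g : ℕ → ℕ → M) :
    ∑ a ∈ Icc 1 N, ∑ b ∈ Icc 1 N with b < a, g a b
      = ∑ c ∈ Icc 1 N, ∑ b ∈ Icc 1 (N - c), g (b + c) b := by
  rw [sum_sigma', sum_sigma']
  refine sum_bij' (fun p _ => ⟨p.1 - p.2, p.2⟩) (fun q _ => ⟨q.2 + q.1, q.2⟩) ?_ ?_ ?_ ?_ ?_ <;>
    rintro ⟨x, y⟩ h <;> simp only [mem_sigma, mem_Icc, mem_filter] at h ⊢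
  · omega
  · omega
  · simp only [Sigma.mk.injEq, heq_eq_eq, and_true]; omega
  · simp only [Sigma.mk.injEq, heq_eq_eq, and_true]; omega
  · rw [Nat.add_sub_cancel' h.2.2.le]

theorem sum_range_neg_one_pow_mul_mem_Icc {R : Type*} [Ring R] [LinearOrder R] [IsOrderedRing R]
    {g : ℕ → R} (hg : Antitone g) (hg0 : ∀ i, 0 ≤ g i) (m : ℕ) :
    ∑ i ∈ range m, (-1) ^ i * g i ∈ Set.Icc 0 (g 0) := by
  induction m generalizing g with
  | zero => simpa using hg0 0
  | succ m ih =>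
    obtain ⟨lo, hi⟩ := ih (g := fun i => g (i + 1)) (fun i j hij => hg (by omega)) (fun i => hg0 _)
    have shift : ∑ i ∈ range (m + 1), (-1) ^ i * g i
        = g 0 - ∑ i ∈ range m, (-1) ^ i * g (i + 1) := by
      rw [sum_range_succ', pow_zero, one_mul, sub_eq_neg_add, ← sum_neg_distrib]
      simp only [pow_succ, mul_neg_one, neg_mul]
    rw [shift]
    exact ⟨sub_nonneg.2 (hi.trans (hg (Nat.zero_le _))), sub_le_self _ lo⟩

theorem sum_Icc_pow_mul_pow_comm {R : Type*} [CommSemiring R] (x y : R) (n : ℕ) :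
    ∑ k ∈ Icc 1 n, x ^ k * y ^ (n - k + 1) = ∑ k ∈ Icc 1 n, y ^ k * x ^ (n - k + 1) := by
  refine sum_nbij' (fun k => n + 1 - k) (fun k => n + 1 - k) ?_ ?_ ?_ ?_ ?_ <;>
    intro k hk <;> simp only [mem_Icc] at hk ⊢ <;> try omega
  rw [mul_comm, show n - (n + 1 - k) + 1 = k by omega, show n + 1 - k = n - k + 1 by omega]

theorem sum_Icc_pow_mul_pow_self {R : Type*} [CommSemiring R] (x : R) (n : ℕ) :
    ∑ k ∈ Icc 1 n, x ^ k * x ^ (n - k + 1) = n * x ^ (n + 1) := by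
  rw [sum_congr rfl fun k hk => by rw [← pow_add, show k + (n - k + 1) = n + 1 by
    simp only [mem_Icc] at hk; omega], sum_const, Nat.card_Icc, nsmul_eq_mul, add_tsub_cancel_right]

theorem sum_Icc_pow_mul_pow_mul_sub {R : Type*} [CommRing R] (x y : R) (n : ℕ) :
    (∑ k ∈ Icc 1 n, x ^ k * y ^ (n - k + 1)) * (x - y) = x * y * (x ^ n - y ^ n) := by
  have : ∑ k ∈ Icc 1 n, x ^ k * y ^ (n - k + 1)
      = x * y * ∑ i ∈ range n, x ^ i * y ^ (n - 1 - i) := by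
    rw [sum_Icc_one_eq_sum_range, mul_sum]
    refine sum_congr rfl fun i hi => ?_
    rw [show n - (i + 1) + 1 = n - 1 - i + 1 by simp only [mem_range] at hi; omega]
    ring
  rw [this, mul_assoc, geom_sum₂_mul]

theorem sum_Icc_inv_pow_mul_inv_pow_mul_sub {K : Type*} [Field K] {a b : K} (ha : a ≠ 0)
    (hb : b ≠ 0) (n : ℕ) :
    (∑ k ∈ Icc 1 n, a⁻¹ ^ k * b⁻¹ ^ (n - k + 1)) * (a - b) = b⁻¹ ^ n - a⁻¹ ^ n := by
  have h := sum_Icc_pow_mul_pow_mul_sub a⁻¹ b⁻¹ n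
  have e : a⁻¹ - b⁻¹ = -(a⁻¹ * b⁻¹) * (a - b) := by field_simp; ring
  rw [e] at h
  refine mul_left_cancel₀ (mul_ne_zero (inv_ne_zero ha) (inv_ne_zero hb)) ?_
  linear_combination -h

noncomputable def altZetaPartial (k N : ℕ) : ℝ := ∑ m ∈ Icc 1 N, (-1) ^ m / (m : ℝ) ^ k

noncomputable def harmonicPow (n N : ℕ) : ℝ := ∑ j ∈ Icc 1 N, 1 / (j : ℝ) ^ n

noncomputable def tailError (n N : ℕ) : ℝ :=
  ∑ c ∈ Icc 1 N, (-1) ^ c / (c : ℝ) * (harmonicPow n N - harmonicPow n (N - c))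

theorem harmonicPow_sub_harmonicPow (n : ℕ) {M N : ℕ} (h : M ≤ N) :
    harmonicPow n N - harmonicPow n M = ∑ j ∈ Ioc M N, 1 / (j : ℝ) ^ n := by
  have Icc_one (K : ℕ) : Icc 1 K = Ioc 0 K := Icc_add_one_left_eq_Ioc 0 K
  rw [harmonicPow, harmonicPow, Icc_one, Icc_one, ← sum_Ioc_consecutive _ (Nat.zero_le M) h,
    add_sub_cancel_left]

theorem sum_Icc_one_div_add_pow (n c N : ℕ) (h : c ≤ N) :
    ∑ b ∈ Icc 1 (N - c), 1 / ((b + c : ℕ) : ℝ) ^ n = harmonicPow n N - harmonicPow n c := by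
  have : Ioc c N = (Icc 1 (N - c)).map (addRightEmbedding c) := by
    rw [map_add_right_Icc, Nat.sub_add_cancel h, add_comm, Icc_add_one_left_eq_Ioc]
  rw [harmonicPow_sub_harmonicPow n h, this, sum_map]
  rfl

theorem neg_one_pow_mul_sum_inv_add_pow_mul_inv_pow {b c : ℕ} (hb : b ≠ 0) (hc : c ≠ 0) (n : ℕ) :
    (-1 : ℝ) ^ (b + c + b) * ∑ k ∈ Icc 1 n, (((b + c : ℕ) : ℝ)⁻¹) ^ k * ((b : ℝ)⁻¹) ^ (n - k + 1)
      = (-1) ^ c / c * (1 / (b : ℝ) ^ n - 1 / ((b + c : ℕ) : ℝ) ^ n) := by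
  have h := sum_Icc_inv_pow_mul_inv_pow_mul_sub (a := ((b + c : ℕ) : ℝ)) (b := b)
    (by norm_cast; omega) (by norm_cast) n
  rw [Nat.cast_add, add_sub_cancel_left, ← eq_div_iff (by norm_cast)] at h
  rw [Nat.cast_add, h, show b + c + b = 2 * b + c by ring, pow_add, pow_mul, neg_one_sq, one_pow,
    one_mul]
  simp only [one_div, inv_pow]
  ring

theorem sum_altZetaPartial_mul_eq_sum_sum (n N : ℕ) :
    ∑ k ∈ Icc 1 n, altZetaPartial k N * altZetaPartial (n - k + 1) N
      = ∑ a ∈ Icc 1 N, ∑ b ∈ Icc 1 N,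
          (-1 : ℝ) ^ (a + b) * ∑ k ∈ Icc 1 n, ((a : ℝ)⁻¹) ^ k * ((b : ℝ)⁻¹) ^ (n - k + 1) := by
  simp_rw [altZetaPartial, sum_mul_sum, mul_sum]
  rw [sum_comm]
  refine sum_congr rfl fun a _ => ?_
  rw [sum_comm]
  refine sum_congr rfl fun b _ => sum_congr rfl fun k _ => ?_
  rw [pow_add, inv_pow, inv_pow]
  ring

theorem sum_altZetaPartial_mul_altZetaPartial (n N : ℕ) :
    ∑ k ∈ Icc 1 n, altZetaPartial k N * altZetaPartial (n - k + 1) N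
      = n * harmonicPow (n + 1) N
        + 2 * (∑ c ∈ Icc 1 N, (-1) ^ c / (c : ℝ) * harmonicPow n c - tailError n N) := by
  let f (a b : ℕ) : ℝ :=
    (-1) ^ (a + b) * ∑ k ∈ Icc 1 n, ((a : ℝ)⁻¹) ^ k * ((b : ℝ)⁻¹) ^ (n - k + 1)
  have expand : ∑ k ∈ Icc 1 n, altZetaPartial k N * altZetaPartial (n - k + 1) N
      = ∑ a ∈ Icc 1 N, ∑ b ∈ Icc 1 N, f a b :=
    sum_altZetaPartial_mul_eq_sum_sum n N
  have symm (a b : ℕ) : f a b = f b a := by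
    simp only [f]; rw [add_comm b a, sum_Icc_pow_mul_pow_comm]
  have diag (a : ℕ) : f a a = n * (1 / (a : ℝ) ^ (n + 1)) := by
    simp only [f]
    rw [sum_Icc_pow_mul_pow_self, ← two_mul, pow_mul, neg_one_sq, one_pow, one_mul, inv_pow,
      one_div]
  have lower (c : ℕ) (hc : c ∈ Icc 1 N) : ∑ b ∈ Icc 1 (N - c), f (b + c) b
      = (-1) ^ c / c * harmonicPow n c
        - (-1) ^ c / c * (harmonicPow n N - harmonicPow n (N - c)) := by
    rw [mem_Icc] at hc
    rw [sum_congr rfl fun b hb => neg_one_pow_mul_sum_inv_add_pow_mul_inv_pow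
      (by rw [mem_Icc] at hb; omega) (by omega) n, ← mul_sum, sum_sub_distrib,
      sum_Icc_one_div_add_pow n c N hc.2]
    unfold harmonicPow
    ring
  rw [expand, sum_sum_eq_sum_diag_add_two_nsmul _ f (fun a _ b _ => symm a b),
    sum_Icc_sum_lt_eq_sum_Icc_sum_add, sum_congr rfl lower, sum_congr rfl fun a _ => diag a,
    ← mul_sum, sum_sub_distrib, nsmul_eq_mul, Nat.cast_ofNat]
  rfl

theorem HasSum.tendsto_sum_Icc_one {f : ℕ → ℝ} {s : ℝ} (h : HasSum (fun i => f (i + 1)) s) :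
    Tendsto (fun N => ∑ m ∈ Icc 1 N, f m) atTop (𝓝 s) := by
  simpa only [sum_Icc_one_eq_sum_range] using h.tendsto_sum_nat

theorem summable_one_div_nat_add_one_pow {k : ℕ} (hk : 2 ≤ k) :
    Summable fun m : ℕ => 1 / ((m : ℝ) + 1) ^ k := by
  exact_mod_cast (summable_nat_add_iff 1).2 (Real.summable_one_div_nat_pow.2 hk)

theorem tendsto_sum_range_neg_one_pow_mul_one_div_succ :
    Tendsto (fun N => ∑ i ∈ range N, (-1 : ℝ) ^ i * (1 / (i + 1))) atTop (𝓝 (Real.log 2)) := by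
  obtain ⟨l, hl⟩ := Antitone.tendsto_alternating_series_of_tendsto_zero
    (antitone_iff_forall_lt.2 fun i j hij => by gcongr) tendsto_one_div_add_atTop_nhds_zero_nat
  have hnhds : 𝓝[<] (1 : ℝ) ≤ 𝓝 1 := nhdsWithin_le_nhds
  have abel := (Real.tendsto_tsum_powerSeries_nhdsWithin_lt hl).mul (tendsto_id.mono_left hnhds)
  have log_series : ∀ᶠ x in 𝓝[<] (1 : ℝ),
      (∑' i : ℕ, (-1 : ℝ) ^ i * (1 / (i + 1)) * x ^ i) * id x = Real.log (1 + x) := by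
    filter_upwards [Ioo_mem_nhdsLT (show (0 : ℝ) < 1 by norm_num)] with x hx
    have hx' : |-x| < 1 := by rw [abs_neg, abs_of_pos hx.1]; exact hx.2
    rw [← tsum_mul_right, ← neg_neg (Real.log (1 + x)), ← sub_neg_eq_add,
      ← (Real.hasSum_pow_div_log_of_abs_lt_one hx').neg.tsum_eq]
    congr 1 with i
    rw [neg_pow, pow_succ, id]
    ring
  have log_cont : Tendsto (fun x : ℝ => Real.log (1 + x)) (𝓝[<] 1) (𝓝 (Real.log 2)) := by
    have : ContinuousAt (fun x : ℝ => Real.log (1 + x)) 1 :=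
      (Real.continuousAt_log (by norm_num)).comp (continuousAt_const.add continuousAt_id)
    simpa only [one_add_one_eq_two] using this.tendsto.mono_left hnhds
  rwa [← tendsto_nhds_unique (abel.congr' log_series) log_cont, mul_one]

theorem tendsto_altZetaPartial {k : ℕ} (hk : 1 ≤ k) :
    Tendsto (altZetaPartial k) atTop (𝓝 (zetaBar k)) := by
  rcases hk.eq_or_lt with rfl | hk
  · rw [zetaBar, if_pos rfl]
    refine tendsto_sum_range_neg_one_pow_mul_one_div_succ.neg.congr fun N => ?_
    rw [altZetaPartial, sum_Icc_one_eq_sum_range, ← sum_neg_distrib]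
    refine sum_congr rfl fun i _ => ?_
    push_cast
    ring
  · rw [zetaBar, if_neg hk.ne']
    have hs : Summable fun m : ℕ => (-1 : ℝ) ^ (m + 1) / ((m : ℝ) + 1) ^ k :=
      .of_norm <| (summable_one_div_nat_add_one_pow hk).congr fun m => by
        rw [norm_div, norm_pow, norm_neg, norm_one, one_pow, Real.norm_of_nonneg (by positivity)]
    exact HasSum.tendsto_sum_Icc_one (f := fun m : ℕ => (-1 : ℝ) ^ m / (m : ℝ) ^ k)
      (by exact_mod_cast hs.hasSum)

theorem tendsto_harmonicPow {n : ℕ} (hn : 2 ≤ n) :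
    Tendsto (harmonicPow n) atTop (𝓝 (∑' m : ℕ, 1 / ((m : ℝ) + 1) ^ n)) :=
  HasSum.tendsto_sum_Icc_one (f := fun j : ℕ => 1 / (j : ℝ) ^ n) <| by
    exact_mod_cast (summable_one_div_nat_add_one_pow hn).hasSum

theorem abs_sum_Ioc_neg_one_pow_div_le (d N : ℕ) :
    |∑ c ∈ Ioc d N, (-1 : ℝ) ^ c / c| ≤ 1 / (d + 1) := by
  have hg : Antitone fun i : ℕ => 1 / ((d + 1 + i : ℕ) : ℝ) :=
    antitone_iff_forall_lt.2 fun i j hij => by gcongr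
  have mem := sum_range_neg_one_pow_mul_mem_Icc hg (fun i => by positivity) (N + 1 - (d + 1))
  rw [← Ico_add_one_add_one_eq_Ioc, sum_Ico_eq_sum_range]
  simp_rw [pow_add, mul_div_assoc, mul_assoc, ← mul_sum, abs_mul, abs_pow, abs_neg, abs_one,
    one_pow, one_mul, div_eq_mul_one_div ((-1 : ℝ) ^ _)]
  rw [abs_of_nonneg mem.1]
  simpa using mem.2

theorem tailError_eq_sum_mul_sum_Ioc (n N : ℕ) :
    tailError n N = ∑ j ∈ Icc 1 N, 1 / (j : ℝ) ^ n * ∑ c ∈ Ioc (N - j) N, (-1 : ℝ) ^ c / c := by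
  simp_rw [tailError, mul_sum]
  rw [sum_congr rfl fun c hc => by
    rw [harmonicPow_sub_harmonicPow n (Nat.sub_le N c), mul_sum]]
  rw [sum_comm' (t' := Icc 1 N) (s' := fun j => Ioc (N - j) N)]
  · exact sum_congr rfl fun j _ => sum_congr rfl fun c _ => mul_comm _ _
  · intro c j; simp only [mem_Icc, mem_Ioc]; omega

theorem abs_tailError_le {n : ℕ} (hn : 1 ≤ n) (N : ℕ) :
    |tailError n N| ≤ 2 * ((N + 1 : ℝ)⁻¹ * ∑ i ∈ range (N + 1), 1 / ((i : ℝ) + 1)) := by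
  have term (j : ℕ) (hj : j ∈ Icc 1 N) :
      |1 / (j : ℝ) ^ n * ∑ c ∈ Ioc (N - j) N, (-1 : ℝ) ^ c / c|
        ≤ (N + 1 : ℝ)⁻¹ * (1 / j + 1 / ((N - j : ℕ) + 1)) := by
    rw [mem_Icc] at hj
    have hj' : (1 : ℝ) ≤ j := by exact_mod_cast hj.1
    rw [abs_mul, abs_of_nonneg (by positivity)]
    calc 1 / (j : ℝ) ^ n * |∑ c ∈ Ioc (N - j) N, (-1 : ℝ) ^ c / c|
        ≤ 1 / j * (1 / ((N - j : ℕ) + 1)) := by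
          gcongr
          · exact le_self_pow₀ hj' (by omega)
          · exact abs_sum_Ioc_neg_one_pow_div_le _ _
      _ = (N + 1 : ℝ)⁻¹ * (1 / j + 1 / ((N - j : ℕ) + 1)) := by
          have : (0 : ℝ) < N - j + 1 := by linarith [(Nat.cast_le (α := ℝ)).2 hj.2]
          rw [Nat.cast_sub hj.2]
          field_simp
          ring
  have reflect : ∑ j ∈ Icc 1 N, 1 / (((N - j : ℕ) : ℝ) + 1) = ∑ j ∈ Icc 1 N, 1 / (j : ℝ) := by
    refine sum_nbij' (fun j => N + 1 - j) (fun j => N + 1 - j) ?_ ?_ ?_ ?_ ?_ <;>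
      intro j hj <;> simp only [mem_Icc] at hj ⊢ <;> try omega
    rw [show N + 1 - j = N - j + 1 by omega, Nat.cast_add_one]
  have harmonic_le : ∑ j ∈ Icc 1 N, 1 / (j : ℝ) ≤ ∑ i ∈ range (N + 1), 1 / ((i : ℝ) + 1) := by
    rw [sum_range_succ, sum_Icc_one_eq_sum_range]
    push_cast
    exact le_add_of_nonneg_right (by positivity)
  rw [tailError_eq_sum_mul_sum_Ioc]
  calc |∑ j ∈ Icc 1 N, 1 / (j : ℝ) ^ n * ∑ c ∈ Ioc (N - j) N, (-1 : ℝ) ^ c / c|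
      ≤ ∑ j ∈ Icc 1 N, (N + 1 : ℝ)⁻¹ * (1 / j + 1 / ((N - j : ℕ) + 1)) :=
        (abs_sum_le_sum_abs _ _).trans (sum_le_sum term)
    _ = 2 * ((N + 1 : ℝ)⁻¹ * ∑ j ∈ Icc 1 N, 1 / (j : ℝ)) := by
        rw [← mul_sum, sum_add_distrib, reflect]
        ring
    _ ≤ 2 * ((N + 1 : ℝ)⁻¹ * ∑ i ∈ range (N + 1), 1 / ((i : ℝ) + 1)) := by
        gcongr

theorem tendsto_tailError {n : ℕ} (hn : 1 ≤ n) : Tendsto (tailError n) atTop (𝓝 0) := by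
  have cesaro := (tendsto_one_div_add_atTop_nhds_zero_nat.cesaro.comp
    (tendsto_add_atTop_nat 1)).const_mul 2
  rw [mul_zero] at cesaro
  refine squeeze_zero_norm (fun N => ?_) cesaro
  simpa only [Real.norm_eq_abs, Function.comp_apply, Nat.cast_add_one]
    using abs_tailError_le hn N

theorem two_mul_Le_one_n_neg_one (n : ℕ) (hn : 1 ≤ n) :
    Tendsto
      (fun N : ℕ => 2 * ∑ n1 ∈ Finset.Icc 1 N,
        ((-1 : ℝ) ^ n1 / n1) * ∑ n2 ∈ Finset.Icc 1 n1, 1 / (n2 : ℝ) ^ n)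
      atTop
      (nhds (∑ k ∈ Finset.Icc 1 n, zetaBar k * zetaBar (n - k + 1)
        - n * ∑' m : ℕ, 1 / (m + 1 : ℝ) ^ (n + 1))) := by
  have products :
      Tendsto (fun N => ∑ k ∈ Icc 1 n, altZetaPartial k N * altZetaPartial (n - k + 1) N)
        atTop (𝓝 (∑ k ∈ Icc 1 n, zetaBar k * zetaBar (n - k + 1))) :=
    tendsto_finsetSum _ fun k hk =>
      (tendsto_altZetaPartial (mem_Icc.1 hk).1).mul (tendsto_altZetaPartial le_add_self)
  have limit := (products.sub ((tendsto_harmonicPow (n := n + 1) (by omega)).const_mul (n : ℝ))).add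
    ((tendsto_tailError hn).const_mul 2)
  rw [mul_zero, add_zero] at limit
  refine limit.congr fun N => ?_
  rw [sum_altZetaPartial_mul_altZetaPartial]
  unfold harmonicPow
  ring
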